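/- arXiv:1310.5330 — 2 statements merged into one kernel-verified Lean document; each statement's English description precedes it below -/
import Mathlib

section
/- There is a unique formal power series solution h̃₀(x) = Σ_{k≥4} c_k x^{-k} (with no terms of order x^{-1}, x^{-2}, x^{-3}) of the equation h'' + h'/x − h − h²/2 − (392/625)x^{-4} = 0, its leading coefficient is c₄ = −392/625, and all coefficients c_k with k odd vanish. -/
/-!
Writing `H = Σ cₖ tᵏ`, the coefficient of `t^(n+4)` in the equation reads
`c_{n+4} = (n+2)² c_{n+2} - b Σ_{4 ≤ i ≤ n} cᵢ c_{n+4-i} - [n = 0] a`,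
where `b = 1/2` and `a = 392/625`. Once `c₀ = ⋯ = c₃ = 0`, the right-hand side only involves
coefficients of lower index, so the coefficients are forced one by one and, conversely, this
recursion defines a solution. It gives `c₄ = -a`, and by strong induction every odd coefficient
vanishes: in `cᵢ c_{n+4-i}` with `n + 4` odd one of the two indices is odd.
-/

open PowerSeries Finset

namespace NormalizedP1

variable {R : Type*} [CommRing R] (b a : R)

noncomputable def operator (H : R⟦X⟧) : R⟦X⟧ :=
  X ^ 4 * derivative R (derivative R H) + X ^ 3 * derivative R H - H - C b * H ^ 2 - C a * X ^ 4

noncomputable def solutionCoeff : ℕ → R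
  | 0 | 1 | 2 | 3 => 0
  | n + 4 => ((n : R) + 2) ^ 2 * solutionCoeff (n + 2)
      - b * ∑ i ∈ (Icc 4 n).attach, solutionCoeff i.1 * solutionCoeff (n + 4 - i.1)
      - if n = 0 then a else 0
  decreasing_by
  · omega
  · have := mem_Icc.mp i.2; omega
  · have := mem_Icc.mp i.2; omega

theorem solutionCoeff_of_lt_four {n : ℕ} (hn : n < 4) : solutionCoeff b a n = 0 := by
  interval_cases n <;> simp [solutionCoeff]

theorem solutionCoeff_add_four (n : ℕ) :
    solutionCoeff b a (n + 4) = ((n : R) + 2) ^ 2 * solutionCoeff b a (n + 2)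
      - b * ∑ i ∈ Icc 4 n, solutionCoeff b a i * solutionCoeff b a (n + 4 - i)
      - if n = 0 then a else 0 := by
  rw [solutionCoeff, ← sum_attach (Icc 4 n)]

theorem solutionCoeff_four : solutionCoeff b a 4 = -a := by
  simp [solutionCoeff_add_four, solutionCoeff_of_lt_four]

theorem solutionCoeff_of_odd {n : ℕ} (hn : Odd n) : solutionCoeff b a n = 0 := by
  induction n using Nat.strong_induction_on with
  | _ n ih =>
    rcases lt_or_ge n 4 with hn4 | hn4
    · exact solutionCoeff_of_lt_four b a hn4
    obtain ⟨m, rfl⟩ := Nat.exists_eq_add_of_le' hn4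
    have hm : m ≠ 0 := by rintro rfl; simp [Nat.odd_iff] at hn
    have hprev : solutionCoeff b a (m + 2) = 0 :=
      ih _ (by omega) (by obtain ⟨k, hk⟩ := hn; exact ⟨k - 1, by omega⟩)
    have hsum : ∑ i ∈ Icc 4 m, solutionCoeff b a i * solutionCoeff b a (m + 4 - i) = 0 := by
      refine sum_eq_zero fun i hi => ?_
      have hi := mem_Icc.mp hi
      rcases Nat.even_or_odd i with hev | hodd
      · have : Odd (m + 4 - i) := by
          obtain ⟨k, hk⟩ := hn; obtain ⟨j, hj⟩ := hev; exact ⟨k - j, by omega⟩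
        rw [ih _ (by omega) this, mul_zero]
      · rw [ih i (by omega) hodd, zero_mul]
    rw [solutionCoeff_add_four, hprev, hsum, if_neg hm]
    ring

theorem coeff_sq_add_four {H : R⟦X⟧} (hH : ∀ k < 4, coeff k H = 0) (n : ℕ) :
    coeff (n + 4) (H ^ 2) = ∑ i ∈ Icc 4 n, coeff i H * coeff (n + 4 - i) H := by
  rw [sq, coeff_mul, Nat.sum_antidiagonal_eq_sum_range_succ_mk]
  refine (sum_subset (fun i hi => by simp only [mem_Icc] at hi; simp only [mem_range]; omega)
    fun i _ hi => ?_).symm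
  simp only [mem_Icc, not_and_or, not_le] at hi
  rcases hi with hi | hi
  · rw [hH i hi, zero_mul]
  · rw [hH (n + 4 - i) (by omega), mul_zero]

theorem coeff_operator_add_four {H : R⟦X⟧} (hH : ∀ k < 4, coeff k H = 0) (n : ℕ) :
    coeff (n + 4) (operator b a H) = ((n : R) + 2) ^ 2 * coeff (n + 2) H - coeff (n + 4) H
      - b * ∑ i ∈ Icc 4 n, coeff i H * coeff (n + 4 - i) H - if n = 0 then a else 0 := by
  have hX3 : coeff (n + 4) (X ^ 3 * derivative R H) = ((n : R) + 2) * coeff (n + 2) H := by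
    rw [show n + 4 = n + 1 + 3 by omega, coeff_X_pow_mul, coeff_derivative]
    push_cast; ring
  have hX4 : coeff (n + 4) (X ^ 4 * derivative R (derivative R H))
      = ((n : R) + 2) * ((n : R) + 1) * coeff (n + 2) H := by
    rw [coeff_X_pow_mul, coeff_derivative, coeff_derivative]
    push_cast; ring
  have hconst : coeff (n + 4) (C a * X ^ 4 : R⟦X⟧) = if n = 0 then a else 0 := by
    rw [coeff_C_mul, coeff_X_pow]
    by_cases h : n = 0 <;> simp [h]
  simp only [operator, map_sub, map_add, coeff_C_mul, coeff_sq_add_four hH, hX3, hX4, hconst]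
  ring

theorem coeff_operator_of_lt_four {H : R⟦X⟧} (hH : ∀ k < 4, coeff k H = 0) {n : ℕ}
    (hn : n < 4) : coeff n (operator b a H) = 0 := by
  have hX3 : coeff n (X ^ 3 * derivative R H) = 0 := by
    rw [coeff_X_pow_mul']
    split_ifs with h
    · rw [coeff_derivative, hH _ (by omega), zero_mul]
    · rfl
  have hsq : coeff n (H ^ 2) = 0 := by
    rw [sq, coeff_mul]
    exact sum_eq_zero fun p hp => by
      rw [hH p.1 (by have := mem_antidiagonal.mp hp; omega), zero_mul]
  simp [operator, coeff_X_pow_mul', coeff_X_pow, hX3, hsq, hH n hn, show n ≠ 4 by omega,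
    show ¬4 ≤ n by omega]

theorem coeff_lt_four_eq_zero_and_operator_eq_zero_iff (H : R⟦X⟧) :
    ((∀ k < 4, coeff k H = 0) ∧ operator b a H = 0) ↔ H = mk (solutionCoeff b a) := by
  constructor
  · rintro ⟨hH, hop⟩
    ext n
    rw [coeff_mk]
    induction n using Nat.strong_induction_on with
    | _ n ih =>
      rcases lt_or_ge n 4 with hn4 | hn4
      · rw [hH n hn4, solutionCoeff_of_lt_four b a hn4]
      obtain ⟨m, rfl⟩ := Nat.exists_eq_add_of_le' hn4
      have hcoeff := coeff_operator_add_four b a hH m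
      rw [hop, map_zero, ih (m + 2) (by omega),
        sum_congr rfl fun i hi => by
          have := mem_Icc.mp hi; rw [ih i (by omega), ih (m + 4 - i) (by omega)]] at hcoeff
      rw [solutionCoeff_add_four]
      linear_combination hcoeff
  · rintro rfl
    have hlow : ∀ k < 4, coeff k (mk (solutionCoeff b a)) = 0 := fun k hk => by
      rw [coeff_mk, solutionCoeff_of_lt_four b a hk]
    refine ⟨hlow, ext fun n => ?_⟩
    rcases lt_or_ge n 4 with hn4 | hn4
    · rw [coeff_operator_of_lt_four b a hlow hn4, map_zero]
    · obtain ⟨m, rfl⟩ := Nat.exists_eq_add_of_le' hn4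
      simp only [coeff_operator_add_four b a hlow, coeff_mk, solutionCoeff_add_four, map_zero]
      ring

end NormalizedP1

/-- In the variable `t = 1/x` (under which `d/dx = -t² d/dt`), the normalized
Painlevé I equation `h'' + h'/x - h - h²/2 - (392/625) x⁻⁴ = 0` becomes
`t⁴ H'' + t³ H' - H - H²/2 - (392/625) t⁴ = 0` for `H(t) = h(1/t)`.
There is a unique formal power series solution `H = Σ_{k ≥ 4} c_k t^k`
(no terms of order `< 4`); its leading coefficient is `c₄ = -392/625`, and all
odd-index coefficients vanish. -/
theorem normalizedP1_unique_formal_solution :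
    (∃! H : PowerSeries ℂ,
      (∀ k < 4, PowerSeries.coeff k H = 0) ∧
      (PowerSeries.X ^ 4 * (PowerSeries.derivative ℂ (PowerSeries.derivative ℂ H))
        + PowerSeries.X ^ 3 * (PowerSeries.derivative ℂ H)
        - H - PowerSeries.C (1 / 2 : ℂ) * H ^ 2
        - PowerSeries.C (392 / 625 : ℂ) * PowerSeries.X ^ 4 = 0)) ∧
    (∀ H : PowerSeries ℂ,
      ((∀ k < 4, PowerSeries.coeff k H = 0) ∧
      (PowerSeries.X ^ 4 * (PowerSeries.derivative ℂ (PowerSeries.derivative ℂ H))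
        + PowerSeries.X ^ 3 * (PowerSeries.derivative ℂ H)
        - H - PowerSeries.C (1 / 2 : ℂ) * H ^ 2
        - PowerSeries.C (392 / 625 : ℂ) * PowerSeries.X ^ 4 = 0)) →
      PowerSeries.coeff 4 H = -392 / 625 ∧
      ∀ k : ℕ, Odd k → PowerSeries.coeff k H = 0) := by
  have hsol := NormalizedP1.coeff_lt_four_eq_zero_and_operator_eq_zero_iff (1 / 2 : ℂ) (392 / 625)
  refine ⟨⟨_, (hsol _).2 rfl, fun H hH => (hsol H).1 hH⟩, fun H hH => ?_⟩
  rw [(hsol H).1 hH]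
  refine ⟨by rw [coeff_mk, NormalizedP1.solutionCoeff_four]; norm_num, fun k hk => ?_⟩
  rw [coeff_mk, NormalizedP1.solutionCoeff_of_odd _ _ hk]
end

section
/- The unique solution H analytic at p = 0 of the convolution equation (p² − 1)·H(p) = (196/1875)·p³ + (p ∗ H)(p) + (1/2)·(H ∗ H)(p) is an odd function: H(−p) = −H(p) on its domain of analyticity. -/
open Metric

/-- Convolution along the straight segment from `0` to `p`:
`(f ∗ g)(p) = ∫₀^p f(s) g(p - s) ds = p ∫₀¹ f(tp) g(p - tp) dt`. -/
noncomputable def segConv (f g : ℂ → ℂ) (p : ℂ) : ℂ :=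
  p * ∫ t in (0 : ℝ)..1, f ((t : ℂ) * p) * g (p - (t : ℂ) * p)

/-! If `H` solves the equation, so does its odd reflection `p ↦ -H (-p)`, because the
segment convolution commutes with odd reflection and `p ↦ p` is its own reflection.
Uniqueness of the solution then forces `-H (-p) = H p`. -/

lemma segConv_neg_comp_neg (f g : ℂ → ℂ) (p : ℂ) :
    segConv (fun s => -f (-s)) (fun s => -g (-s)) p = -segConv f g (-p) := by
  simp only [segConv, neg_mul, neg_neg]
  congr 1
  refine intervalIntegral.integral_congr fun t _ => ?_
  ring_nf

lemma segConv_id_neg_comp_neg (g : ℂ → ℂ) (p : ℂ) :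
    segConv (fun s => s) (fun s => -g (-s)) p = -segConv (fun s => s) g (-p) := by
  simpa only [neg_neg] using segConv_neg_comp_neg (fun s => s) g p

lemma AnalyticOnNhd.neg_comp_neg_ball {H : ℂ → ℂ} {r : ℝ}
    (hH : AnalyticOnNhd ℂ H (ball (0 : ℂ) r)) :
    AnalyticOnNhd ℂ (fun s => -H (-s)) (ball (0 : ℂ) r) := fun p hp =>
  ((hH (-p) (by simpa using hp)).comp analyticAt_id.neg).neg

theorem borel_H0_odd_general (r : ℝ) (H : ℂ → ℂ)
    (hH : AnalyticOnNhd ℂ H (ball (0 : ℂ) r))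
    (heq : ∀ p ∈ ball (0 : ℂ) r,
      (p ^ 2 - 1) * H p
        = (196 / 1875) * p ^ 3 + segConv (fun s => s) H p
          + (1 / 2) * segConv H H p)
    (huniq : ∀ G : ℂ → ℂ, AnalyticOnNhd ℂ G (ball (0 : ℂ) r) →
      (∀ p ∈ ball (0 : ℂ) r,
        (p ^ 2 - 1) * G p
          = (196 / 1875) * p ^ 3 + segConv (fun s => s) G p
            + (1 / 2) * segConv G G p) →
      ∀ p ∈ ball (0 : ℂ) r, G p = H p) :
    ∀ p ∈ ball (0 : ℂ) r, H (-p) = -H p := by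
  have hreflect : ∀ p ∈ ball (0 : ℂ) r,
      (p ^ 2 - 1) * -H (-p)
        = (196 / 1875) * p ^ 3 + segConv (fun s => s) (fun s => -H (-s)) p
          + (1 / 2) * segConv (fun s => -H (-s)) (fun s => -H (-s)) p := by
    intro p hp
    rw [segConv_id_neg_comp_neg, segConv_neg_comp_neg]
    linear_combination -heq (-p) (by simpa using hp)
  intro p hp
  linear_combination -huniq _ hH.neg_comp_neg_ball hreflect p hp

/-- The unique solution `H` analytic at `p = 0` of the convolution equation
`(p² - 1) H = (196/1875) p³ + p ∗ H + (1/2) H ∗ H` is an odd function. -/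
theorem borel_H0_odd (r : ℝ) (hr : 0 < r) (H : ℂ → ℂ)
    (hH : AnalyticOnNhd ℂ H (ball (0 : ℂ) r))
    (heq : ∀ p ∈ ball (0 : ℂ) r,
      (p ^ 2 - 1) * H p
        = (196 / 1875) * p ^ 3 + segConv (fun s => s) H p
          + (1 / 2) * segConv H H p)
    (huniq : ∀ G : ℂ → ℂ, AnalyticOnNhd ℂ G (ball (0 : ℂ) r) →
      (∀ p ∈ ball (0 : ℂ) r,
        (p ^ 2 - 1) * G p
          = (196 / 1875) * p ^ 3 + segConv (fun s => s) G p
            + (1 / 2) * segConv G G p) →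
      ∀ p ∈ ball (0 : ℂ) r, G p = H p) :
    ∀ p ∈ ball (0 : ℂ) r, H (-p) = -H p :=
  borel_H0_odd_general r H hH heq huniq
end
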